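/- Let P be a Poisson n-Lie algebra and I an ideal. Define I^{1)} = I, I^{k+1)} = I^{k)}·I (associative powers) and I^{(1} = I, I^{(k+1} = [I^{(k}, I, P, …, P] (n-Lie powers), and the combined series I¹ = I, I^{k+1} = [I^k, I, P, …, P] + I^k·I. Then for every k ≥ 1, I^k is contained in the sum over all tuples (r₁,…,r_t) with r₁+⋯+r_t = k of the products I^{r₁)} · I^{(r₂} ⋯ I^{(r_t} (with the convention that a factor with exponent 0 acts trivially). -/

import Mathlib

/-! Bracketing with `I` is linear in the first argument, so it distributes over the supremum
defining the right-hand side; on a product it acts as a derivation, so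
`[I^{a)} · I^{(r₁} ⋯ I^{(r_t}, I, P, …, P]` lies in the sum of the products in which exactly one
factor is replaced by its bracket with `I`. Bracketing `I^{(r}` gives `I^{(r+1}`, bracketing a
factor `I` of `I^{a)}` gives `I^{(2}`, and bracketing the unit gives `0`, so the total exponent
goes up by one. Multiplying by `I` raises the associative exponent by one. -/

/-- Span of brackets with first entry in `S` and second entry in `T`. -/
def bk2 (F : Type*) {P : Type*} [Field F] [CommRing P] [Algebra F P] {m : ℕ}
    (br : (Fin (m + 2) → P) → P) (S T : Submodule F P) : Submodule F P :=
  Submodule.span F {z | ∃ x : Fin (m + 2) → P, x 0 ∈ S ∧ x 1 ∈ T ∧ z = br x}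

/-- An ideal of a Poisson `n`-Lie algebra. -/
def IsPoissonIdeal (F : Type*) {P : Type*} [Field F] [CommRing P] [Algebra F P]
    {m : ℕ} (br : (Fin (m + 2) → P) → P) (I : Submodule F P) : Prop :=
  (∀ a ∈ I, ∀ p : P, a * p ∈ I) ∧
    ∀ x : Fin (m + 2) → P, x 0 ∈ I → br x ∈ I

/-- Associative powers `I^{k)}` (0-indexed: `aPow I k = I^{k+1)}`). -/
def aPow (F : Type*) {P : Type*} [Field F] [CommRing P] [Algebra F P]
    (I : Submodule F P) : ℕ → Submodule F P
  | 0 => I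
  | k + 1 => aPow F I k * I

/-- `n`-Lie powers `I^{(k}` (0-indexed: `lPow I k = I^{(k+1}`). -/
def lPow (F : Type*) {P : Type*} [Field F] [CommRing P] [Algebra F P] {m : ℕ}
    (br : (Fin (m + 2) → P) → P) (I : Submodule F P) : ℕ → Submodule F P
  | 0 => I
  | k + 1 => bk2 F br (lPow F br I k) I

/-- Combined ideal lower central series (0-indexed: `cI I k = I^{k+1}`). -/
def cI (F : Type*) {P : Type*} [Field F] [CommRing P] [Algebra F P] {m : ℕ}
    (br : (Fin (m + 2) → P) → P) (I : Submodule F P) : ℕ → Submodule F P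
  | 0 => I
  | k + 1 => bk2 F br (cI F br I k) I ⊔ cI F br I k * I

/-- Product `I^{(r₂} ⋯ I^{(r_t}` associated with a list of positive exponents. -/
def lieProd (F : Type*) {P : Type*} [Field F] [CommRing P] [Algebra F P] {m : ℕ}
    (br : (Fin (m + 2) → P) → P) (I : Submodule F P) (l : List ℕ) :
    Submodule F P :=
  (l.map fun r => lPow F br I (r - 1)).foldr (· * ·) 1

section Bracket

variable {F P : Type*} [Field F] [CommRing P] [Algebra F P] {m : ℕ}
  (br : MultilinearMap F (fun _ : Fin (m + 2) => P) P)

def consLinearMap (t : Fin (m + 1) → P) : P →ₗ[F] P where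
  toFun p := br (Fin.cons p t)
  map_add' := br.cons_add t
  map_smul' := br.cons_smul t

def LeibnizInFirstArg : Prop :=
  ∀ (u v : P) (x : Fin (m + 1) → P),
    br (Fin.cons (u * v) x) = u * br (Fin.cons v x) + v * br (Fin.cons u x)

theorem bk2_eq_iSup_map (S T : Submodule F P) :
    bk2 F br S T = ⨆ (t : Fin (m + 1) → P) (_ : t 0 ∈ T), S.map (consLinearMap br t) := by
  apply le_antisymm
  · rw [bk2, Submodule.span_le]
    rintro _ ⟨x, hx0, hx1, rfl⟩
    rw [← Fin.cons_self_tail x]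
    have ht : Fin.tail x 0 ∈ T := by rwa [Fin.tail, Fin.succ_zero_eq_one]
    exact Submodule.mem_iSup_of_mem (Fin.tail x) <|
      Submodule.mem_iSup_of_mem ht (Submodule.mem_map_of_mem hx0)
  · refine iSup₂_le fun t ht => Submodule.map_le_iff_le_comap.mpr fun p hp => ?_
    exact Submodule.subset_span ⟨Fin.cons p t, hp, by rwa [Fin.cons_one], rfl⟩

theorem bk2_mono_left {S S' : Submodule F P} (h : S ≤ S') (T : Submodule F P) :
    bk2 F br S T ≤ bk2 F br S' T := by
  simp only [bk2_eq_iSup_map]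
  gcongr

theorem bk2_iSup_left {ι : Sort*} (S : ι → Submodule F P) (T : Submodule F P) :
    bk2 F br (⨆ i, S i) T = ⨆ i, bk2 F br (S i) T := by
  simp only [bk2_eq_iSup_map, Submodule.map_iSup]
  rw [iSup_comm]
  exact iSup_congr fun t => iSup_comm

theorem bk2_mul_left_le (hLeib : LeibnizInFirstArg br) (S T U : Submodule F P) :
    bk2 F br (S * T) U ≤ S * bk2 F br T U ⊔ T * bk2 F br S U := by
  rw [bk2_eq_iSup_map]
  refine iSup₂_le fun t ht => Submodule.map_le_iff_le_comap.mpr <| Submodule.mul_le.mpr ?_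
  intro s hs u hu
  change br (Fin.cons (s * u) t) ∈ S * bk2 F br T U ⊔ T * bk2 F br S U
  rw [hLeib]
  have mem_bk2 {V : Submodule F P} {p : P} (hp : p ∈ V) : br (Fin.cons p t) ∈ bk2 F br V U := by
    rw [bk2_eq_iSup_map]
    exact Submodule.mem_iSup_of_mem t <|
      Submodule.mem_iSup_of_mem ht (Submodule.mem_map_of_mem hp)
  exact add_mem (Submodule.mem_sup_left (Submodule.mul_mem_mul hs (mem_bk2 hu)))
    (Submodule.mem_sup_right (Submodule.mul_mem_mul hu (mem_bk2 hs)))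

theorem bk2_one_left (hLeib : LeibnizInFirstArg br) (T : Submodule F P) :
    bk2 F br 1 T = ⊥ := by
  have bracket_one (t : Fin (m + 1) → P) : consLinearMap br t 1 = 0 := by
    change br (Fin.cons 1 t) = 0
    simpa using hLeib 1 1 t
  simp [bk2_eq_iSup_map, Submodule.one_eq_span, Submodule.map_span, bracket_one]

end Bracket

section MixedProducts

variable {F P : Type*} [Field F] [CommRing P] [Algebra F P] {m : ℕ}
  (br : MultilinearMap F (fun _ : Fin (m + 2) => P) P) (I : Submodule F P)

/-- `I^{a)}`, with `I^{0)} = 1`. -/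
def assocPow (a : ℕ) : Submodule F P :=
  if a = 0 then 1 else aPow F I (a - 1)

theorem assocPow_one : assocPow I 1 = I := rfl

theorem assocPow_succ (a : ℕ) : assocPow I (a + 1) = assocPow I a * I := by
  cases a <;> simp [assocPow, aPow]

theorem lieProd_nil : lieProd F br I [] = 1 := rfl

theorem lieProd_cons (r : ℕ) (l : List ℕ) :
    lieProd F br I (r :: l) = lPow F br I (r - 1) * lieProd F br I l := rfl

def mixedSum (s : ℕ) : Submodule F P :=
  ⨆ (a : ℕ) (l : List ℕ) (_ : a + l.sum = s) (_ : ∀ r ∈ l, 0 < r),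
    assocPow I a * lieProd F br I l

variable {I} in
theorem le_mixedSum {a s : ℕ} {l : List ℕ} (h : a + l.sum = s) (hl : ∀ r ∈ l, 0 < r) :
    assocPow I a * lieProd F br I l ≤ mixedSum br I s :=
  le_iSup_of_le a <| le_iSup_of_le l <| le_iSup_of_le h <| le_iSup_of_le hl le_rfl

theorem mixedSum_mul_le (s : ℕ) : mixedSum br I s * I ≤ mixedSum br I (s + 1) := by
  simp only [mixedSum, Submodule.iSup_mul, iSup_le_iff]
  intro a l hs hl
  rw [mul_right_comm, ← assocPow_succ]
  exact le_mixedSum br (by omega) hl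

theorem lPow_mul_mixedSum_le {r : ℕ} (hr : 0 < r) (s : ℕ) :
    lPow F br I (r - 1) * mixedSum br I s ≤ mixedSum br I (s + r) := by
  simp only [mixedSum, Submodule.mul_iSup, iSup_le_iff]
  intro a l hs hl
  rw [mul_left_comm, ← lieProd_cons]
  refine le_mixedSum br (l := r :: l) (by simp; omega) ?_
  simpa [hr] using hl

theorem bk2_assocPow_le (hLeib : LeibnizInFirstArg br) (a : ℕ) :
    bk2 F br (assocPow I (a + 1)) I ≤ assocPow I a * lPow F br I 1 := by
  induction a with
  | zero => simp [assocPow, aPow, lPow]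
  | succ a ih =>
    rw [assocPow_succ]
    refine (bk2_mul_left_le br hLeib _ _ _).trans (sup_le le_rfl ?_)
    calc I * bk2 F br (assocPow I (a + 1)) I ≤ I * (assocPow I a * lPow F br I 1) := by gcongr
      _ = assocPow I (a + 1) * lPow F br I 1 := by rw [assocPow_succ]; ring

theorem bk2_mixedProduct_le (hLeib : LeibnizInFirstArg br) (a : ℕ) {l : List ℕ}
    (hl : ∀ r ∈ l, 0 < r) :
    bk2 F br (assocPow I a * lieProd F br I l) I ≤ mixedSum br I (a + l.sum + 1) := by
  induction l with
  | nil =>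
    rw [lieProd_nil, mul_one]
    cases a with
    | zero => simp [assocPow, bk2_one_left br hLeib]
    | succ a =>
      calc _ ≤ assocPow I a * lPow F br I 1 := bk2_assocPow_le br I hLeib a
        _ = assocPow I a * lieProd F br I [2] := by rw [lieProd_cons, lieProd_nil, mul_one]
        _ ≤ _ := le_mixedSum br (by simp) (by simp)
  | cons r l ih =>
    obtain ⟨hr, hl⟩ := List.forall_mem_cons.mp hl
    have hprod : assocPow I a * lieProd F br I (r :: l) =
        lPow F br I (r - 1) * (assocPow I a * lieProd F br I l) := by
      rw [lieProd_cons, mul_left_comm]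
    rw [hprod]
    refine (bk2_mul_left_le br hLeib _ _ _).trans (sup_le ?_ ?_)
    · calc _ ≤ lPow F br I (r - 1) * mixedSum br I (a + l.sum + 1) := by gcongr; exact ih hl
        _ ≤ _ := (lPow_mul_mixedSum_le br I hr _).trans_eq <|
          congrArg _ (by rw [List.sum_cons]; omega)
    · have hbk : bk2 F br (lPow F br I (r - 1)) I = lPow F br I (r + 1 - 1) := by
        rw [show r + 1 - 1 = r - 1 + 1 by omega]; rfl
      rw [hbk, mul_assoc, mul_comm _ (lPow F br I _), ← lieProd_cons]
      exact le_mixedSum br (l := (r + 1) :: l) (by simp; omega) (by simpa using hl)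

theorem bk2_mixedSum_le (hLeib : LeibnizInFirstArg br) (s : ℕ) :
    bk2 F br (mixedSum br I s) I ≤ mixedSum br I (s + 1) := by
  simp only [mixedSum, bk2_iSup_left, iSup_le_iff]
  intro a l hs hl
  exact hs ▸ bk2_mixedProduct_le br I hLeib a hl

end MixedProducts

theorem ideal_lcs_le_mixed_products_general
    (F P : Type*) [Field F] [CommRing P] [Algebra F P] (m : ℕ)
    (br : AlternatingMap F P P (Fin (m + 2)))
    (hLeib : ∀ (u v : P) (x : Fin (m + 1) → P),
      br (Fin.cons (u * v) x) = u * br (Fin.cons v x) + v * br (Fin.cons u x))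
    (I : Submodule F P) (k : ℕ) :
    cI F (⇑br) I k ≤
      ⨆ (a : ℕ) (l : List ℕ) (_ : a + l.sum = k + 1) (_ : ∀ r ∈ l, 0 < r),
        (if a = 0 then (1 : Submodule F P) else aPow F I (a - 1)) *
          lieProd F (⇑br) I l := by
  change cI F br.toMultilinearMap I k ≤ mixedSum br.toMultilinearMap I (k + 1)
  induction k with
  | zero =>
    have h := le_mixedSum br.toMultilinearMap (I := I) (a := 1) (l := []) rfl (by simp)
    rwa [assocPow_one, lieProd_nil, mul_one] at h
  | succ k ih =>
    exact sup_le ((bk2_mono_left _ ih I).trans (bk2_mixedSum_le _ I hLeib _))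
      ((mul_le_mul_left ih I).trans (mixedSum_mul_le _ I _))

/-- For an ideal `I` of a Poisson `n`-Lie algebra,
`I^k ⊆ Σ_{r₁+⋯+r_t=k} I^{r₁)} · I^{(r₂} ⋯ I^{(r_t}`, where a factor with
exponent `0` acts trivially (here encoded by the associative exponent `a`,
with `a = 0` meaning the associative factor is absent). -/
theorem ideal_lcs_le_mixed_products
    (F P : Type*) [Field F] [CommRing P] [Algebra F P] (m : ℕ)
    (br : AlternatingMap F P P (Fin (m + 2)))
    (hFI : ∀ (x : Fin (m + 1) → P) (y : Fin (m + 2) → P),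
      br (Fin.snoc x (br y)) =
        ∑ i, br (Function.update y i (br (Fin.snoc x (y i)))))
    (hLeib : ∀ (u v : P) (x : Fin (m + 1) → P),
      br (Fin.cons (u * v) x) = u * br (Fin.cons v x) + v * br (Fin.cons u x))
    (I : Submodule F P) (hI : IsPoissonIdeal F (⇑br) I) (k : ℕ) :
    cI F (⇑br) I k ≤
      ⨆ (a : ℕ) (l : List ℕ) (_ : a + l.sum = k + 1) (_ : ∀ r ∈ l, 0 < r),
        (if a = 0 then (1 : Submodule F P) else aPow F I (a - 1)) *
          lieProd F (⇑br) I l :=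
  ideal_lcs_le_mixed_products_general F P m br hLeib I k
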